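/- arXiv:2508.03848 — 3 statements merged into one kernel-verified Lean document; each statement's English description precedes it below -/
import Mathlib

section
/- Let K be a field and let M be an n×n symmetric matrix over K with rank exactly n − 1. Then there exists a nonzero vector v ∈ Kⁿ and a scalar c ∈ K such that adj(M) = c·(v·vᵀ); i.e., the quadratic form xᵀ·adj(M)·x is a scalar multiple of the square of the linear form ⟨v, x⟩. -/
open Matrix

theorem stmt8 {K : Type} [Field K] {n : ℕ}
    (M : Matrix (Fin n) (Fin n) K) (hM : M.IsSymm) (hrank : M.rank = n - 1) (hn : 2 ≤ n) :
    ∃ (v : Fin n → K) (c : K), v ≠ 0 ∧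
      M.adjugate = c • Matrix.vecMulVec v v ∧
      ∀ x : Fin n → K, x ⬝ᵥ M.adjugate.mulVec x = c * (v ⬝ᵥ x) ^ 2 := by
  classical
  set A := M.adjugate with hA
  have hdet : M.det = 0 := by
    by_contra h
    have : M.rank = n := by
      have := M.rank_of_isUnit (M.isUnit_iff_isUnit_det.mpr (isUnit_iff_ne_zero.mpr h))
      simpa using this
    omega
  have hMA : M * A = 0 := by
    rw [hA, Matrix.mul_adjugate, hdet, zero_smul]
  have hAs : Aᵀ = A := by
    rw [hA, Matrix.adjugate_transpose, hM.eq]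
  have hker : Module.finrank K (LinearMap.ker M.mulVecLin) = 1 := by
    have h1 := LinearMap.finrank_range_add_finrank_ker M.mulVecLin
    have h2 : Module.finrank K (Fin n → K) = n := Module.finrank_fin_fun K
    rw [h2] at h1
    have h3 : Module.finrank K (LinearMap.range M.mulVecLin) = n - 1 := hrank
    omega
  obtain ⟨v, hv0, hvspan⟩ := finrank_eq_one_iff'.mp hker
  have hv0' : (v : Fin n → K) ≠ 0 := fun h => hv0 (Subtype.ext h)
  -- columns of A lie in ker
  have hcol : ∀ j, ∃ c : K, ∀ i, A i j = c * (v : Fin n → K) i := by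
    intro j
    have hmem : (fun i => A i j) ∈ LinearMap.ker M.mulVecLin := by
      rw [LinearMap.mem_ker]
      funext i
      have := congrFun (congrFun hMA i) j
      simpa [Matrix.mul_apply, Matrix.mulVecLin_apply, Matrix.mulVec, dotProduct] using this
    obtain ⟨c, hc⟩ := hvspan ⟨_, hmem⟩
    exact ⟨c, fun i => by
      have := congrFun (congrArg (Subtype.val) hc) i
      simpa using this.symm⟩
  choose c hc using hcol
  obtain ⟨i0, hi0⟩ : ∃ i0, (v : Fin n → K) i0 ≠ 0 := by
    by_contra h
    push_neg at h
    exact hv0' (funext h)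
  set lam := c i0 / (v : Fin n → K) i0 with hlam
  have hcj : ∀ j, c j = lam * (v : Fin n → K) j := by
    intro j
    have h1 : A i0 j = A j i0 := by
      have := congrFun (congrFun hAs j) i0
      simpa [Matrix.transpose_apply] using this
    rw [hc j i0, hc i0 j] at h1
    rw [hlam, div_mul_eq_mul_div, eq_div_iff hi0]
    linear_combination h1
  have hAeq : A = lam • Matrix.vecMulVec (v : Fin n → K) (v : Fin n → K) := by
    ext i j
    rw [hc j i, hcj j]
    simp [Matrix.vecMulVec_apply]
    ring
  refine ⟨(v : Fin n → K), lam, hv0', hAeq, ?_⟩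
  intro x
  rw [hAeq]
  simp [Matrix.mulVec, Matrix.vecMulVec_apply, dotProduct, Finset.mul_sum, Finset.sum_mul, sq]
  rw [Finset.sum_comm]
  congr 1; funext i; congr 1; funext j; ring
end

section
/- Let K be a field of characteristic zero and let A, B be symmetric n×n matrices over K such that the pencil (A, B) is nondegenerate in the sense that the binary form F(x,y) = det(Ax − By) is nonzero with n distinct roots in P¹(K̄). If F splits completely over K, i.e. F(x,y) = ∏ⱼ(sⱼx − tⱼy) with sⱼ, tⱼ ∈ K, then there exists an invertible matrix U over K with UᵀAU and UᵀBU both diagonal; i.e., A and B are simultaneously diagonalizable by congruence over K. -/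
/-!
At each root pick a nonzero kernel vector `v j` of the singular member `t j • A - s j • B`.
For `i ≠ j`, symmetry of `A` and `B` turns the two kernel equations into two linear relations
between `v i ⬝ᵥ A *ᵥ v j` and `v i ⬝ᵥ B *ᵥ v j` with determinant `s i * t j - s j * t i ≠ 0`,
so both vanish. If `C` is an invertible member of the pencil, the `v j` are eigenvectors of
`C⁻¹ * (t k • A - s k • B)` with distinct eigenvalues, hence a basis, and the matrix with
columns `v j` is the required congruence.
-/

open Matrix

section Pencil

variable {m : Type*} [Fintype m]

theorem Matrix.transpose_mul_mul_apply {R n : Type*} [Fintype n] [NonUnitalSemiring R]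
    (U : Matrix m n R) (M : Matrix m m R) (i j : n) :
    (Uᵀ * M * U) i j = U.col i ⬝ᵥ M *ᵥ U.col j := by
  rw [Matrix.mul_assoc, mul_apply']
  rfl

theorem Matrix.IsSymm.dotProduct_mulVec_comm {R : Type*} [CommSemiring R] {M : Matrix m m R}
    (hM : M.IsSymm) (u w : m → R) : u ⬝ᵥ M *ᵥ w = w ⬝ᵥ M *ᵥ u := by
  rw [dotProduct_mulVec, ← mulVec_transpose, hM.eq, dotProduct_comm]

theorem dotProduct_pencil_mulVec {R : Type*} [CommRing R] (A B : Matrix m m R) (x y : R)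
    (u w : m → R) : u ⬝ᵥ (x • A - y • B) *ᵥ w = x * (u ⬝ᵥ A *ᵥ w) - y * (u ⬝ᵥ B *ᵥ w) := by
  simp only [sub_mulVec, smul_mulVec, dotProduct_sub, dotProduct_smul, smul_eq_mul]

theorem smul_pencil_mulVec_of_mulVec_eq_zero {R : Type*} [CommRing R] {A B : Matrix m m R}
    {s t : R} {v : m → R} (hv : (t • A - s • B) *ᵥ v = 0) (a b x y : R) :
    (s * x - t * y) • ((a • A - b • B) *ᵥ v) = (a * s - b * t) • ((x • A - y • B) *ᵥ v) := by
  simp only [sub_mulVec, smul_mulVec] at hv ⊢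
  linear_combination (norm := module) (b * x - a * y) • hv

theorem dotProduct_mulVec_eq_zero_of_pencil {R : Type*} [CommRing R] [NoZeroDivisors R]
    {A B : Matrix m m R} (hA : A.IsSymm) (hB : B.IsSymm) {sᵢ tᵢ sⱼ tⱼ : R} {u w : m → R}
    (hu : (tᵢ • A - sᵢ • B) *ᵥ u = 0) (hw : (tⱼ • A - sⱼ • B) *ᵥ w = 0)
    (hst : sᵢ * tⱼ - sⱼ * tᵢ ≠ 0) :
    u ⬝ᵥ A *ᵥ w = 0 ∧ u ⬝ᵥ B *ᵥ w = 0 := by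
  have hj := dotProduct_pencil_mulVec A B tⱼ sⱼ u w
  have hi := dotProduct_pencil_mulVec A B tᵢ sᵢ w u
  rw [hw, dotProduct_zero] at hj
  rw [hu, dotProduct_zero, hA.dotProduct_mulVec_comm, hB.dotProduct_mulVec_comm] at hi
  constructor
  · refine (mul_eq_zero.mp ?_).resolve_left hst
    linear_combination sⱼ * hi - sᵢ * hj
  · refine (mul_eq_zero.mp ?_).resolve_left hst
    linear_combination tⱼ * hi - tᵢ * hj

variable {K : Type*} [Field K] [DecidableEq m]

theorem linearIndependent_of_mulVec_eq_smul_mulVec {ι : Type*} {M C : Matrix m m K}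
    (hC : IsUnit C.det) {v : ι → m → K} {μ : ι → K} (hv : ∀ j, v j ≠ 0)
    (hμ : Function.Injective μ) (hMv : ∀ j, M *ᵥ v j = μ j • (C *ᵥ v j)) :
    LinearIndependent K v := by
  refine Module.End.eigenvectors_linearIndependent' (mulVecLin (C⁻¹ * M)) μ hμ v fun j =>
    ⟨Module.End.mem_eigenspace_iff.mpr ?_, hv j⟩
  rw [mulVecLin_apply, ← mulVec_mulVec, hMv, mulVec_smul, mulVec_mulVec,
    nonsing_inv_mul C hC, one_mulVec]

theorem linearIndependent_of_pencil_mulVec_eq_zero {ι : Type*} {A B : Matrix m m K} {x y : K}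
    (hC : IsUnit (x • A - y • B).det) {s t : ι → K} (hc : ∀ j, s j * x - t j * y ≠ 0)
    (hst : ∀ i j, i ≠ j → s i * t j - s j * t i ≠ 0) {v : ι → m → K} (hv0 : ∀ j, v j ≠ 0)
    (hv : ∀ j, (t j • A - s j • B) *ᵥ v j = 0) :
    LinearIndependent K v := by
  rcases isEmpty_or_nonempty ι with _ | ⟨⟨k⟩⟩
  · exact linearIndependent_empty_type
  -- the eigenvalues `μ j` are distinct because `s k * x - t k * y ≠ 0`
  refine linearIndependent_of_mulVec_eq_smul_mulVec (M := t k • A - s k • B)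
    (μ := fun j => (t k * s j - s k * t j) / (s j * x - t j * y)) hC hv0 ?_ fun j => ?_
  · intro i j hμ
    by_contra hij
    rw [div_eq_div_iff (hc i) (hc j)] at hμ
    exact mul_ne_zero (hc k) (hst i j hij) (by linear_combination hμ)
  · rw [div_eq_inv_mul, mul_smul, ← smul_pencil_mulVec_of_mulVec_eq_zero (hv j), smul_smul,
      inv_mul_cancel₀ (hc j), one_smul]

end Pencil

theorem stmt11_general {K : Type} [Field K] {n : ℕ}
    (A B : Matrix (Fin n) (Fin n) K) (hA : A.IsSymm) (hB : B.IsSymm)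
    (s t : Fin n → K)
    (hfact : ∀ x y : K, (x • A - y • B).det = ∏ j : Fin n, (s j * x - t j * y))
    (hne : ∃ x y : K, (x • A - y • B).det ≠ 0)
    (hdist : ∀ i j : Fin n, i ≠ j → s i * t j - s j * t i ≠ 0) :
    ∃ U : Matrix (Fin n) (Fin n) K, IsUnit U.det ∧
      (Uᵀ * A * U).IsDiag ∧ (Uᵀ * B * U).IsDiag := by
  obtain ⟨x, y, hC⟩ := hne
  have hc : ∀ j, s j * x - t j * y ≠ 0 := fun j =>
    Finset.prod_ne_zero_iff.mp (hfact x y ▸ hC) j (Finset.mem_univ j)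
  have hsing : ∀ j, (t j • A - s j • B).det = 0 := fun j => by
    rw [hfact]
    exact Finset.prod_eq_zero (Finset.mem_univ j) (by ring)
  choose v hv0 hv using fun j => exists_mulVec_eq_zero_iff.mpr (hsing j)
  let U : Matrix (Fin n) (Fin n) K := Matrix.of fun i j => v j i
  have hli : LinearIndependent K U.col :=
    linearIndependent_of_pencil_mulVec_eq_zero (isUnit_iff_ne_zero.mpr hC) hc hdist hv0 hv
  have horth := fun i j (hij : i ≠ j) =>
    dotProduct_mulVec_eq_zero_of_pencil hA hB (hv i) (hv j) (hdist i j hij)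
  refine ⟨U, (isUnit_iff_isUnit_det U).mp (linearIndependent_cols_iff_isUnit.mp hli),
    fun i j hij => ?_, fun i j hij => ?_⟩
  · exact (transpose_mul_mul_apply U A i j).trans (horth i j hij).1
  · exact (transpose_mul_mul_apply U B i j).trans (horth i j hij).2

theorem stmt11 {K : Type} [Field K] [CharZero K] {n : ℕ}
    (A B : Matrix (Fin n) (Fin n) K) (hA : A.IsSymm) (hB : B.IsSymm)
    (s t : Fin n → K)
    (hfact : ∀ x y : K, (x • A - y • B).det = ∏ j : Fin n, (s j * x - t j * y))
    (hne : ∃ x y : K, (x • A - y • B).det ≠ 0)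
    (hdist : ∀ i j : Fin n, i ≠ j → s i * t j - s j * t i ≠ 0) :
    ∃ U : Matrix (Fin n) (Fin n) K, IsUnit U.det ∧
      (Uᵀ * A * U).IsDiag ∧ (Uᵀ * B * U).IsDiag :=
  stmt11_general A B hA hB s t hfact hne hdist
end

section
/- Let n ≥ 3 and let A, B be symmetric n×n matrices over a field K of characteristic zero such that F(x,y) = det(Ax − By) has n distinct roots in P¹(K̄), with factorization F(x,y) = ∏ᵢ(sᵢx − tᵢy) over the splitting field L of F. Then A and B can be simultaneously diagonalized by a congruence transformation defined over L: there exists U ∈ GL_n(L) with UᵀAU and UᵀBU both diagonal. -/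
/-!
For each root `(s i : t i)` pick `v i ≠ 0` with `t i • A v i = s i • B v i`. When two roots are
distinct, the symmetry of `A` and `B` turns these two relations into a nonsingular `2 × 2`
linear system for `(v i ⬝ᵥ A v j, v i ⬝ᵥ B v j)`, so both vanish. The `v i` form a basis: for an
invertible member `P` of the pencil and any other member `Q` independent of it, each `v i` is an
eigenvector of `P⁻¹ Q`, with eigenvalues that are pairwise distinct because the roots are.
The matrix with columns `v i` is therefore the required congruence.
-/

open Matrix

theorem exists_mul_sub_mul_ne_zero {R : Type*} [Ring R] {x₀ y₀ : R} (h : x₀ ≠ 0 ∨ y₀ ≠ 0) :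
    ∃ x₁ y₁ : R, x₀ * y₁ - x₁ * y₀ ≠ 0 := by
  rcases h with hx | hy
  · exact ⟨0, 1, by simpa using hx⟩
  · exact ⟨-1, 0, by simpa using hy⟩

namespace Matrix

variable {ι κ R K : Type*} [Fintype ι]

section CommRing

variable [CommRing R]

theorem dotProduct_mulVec_eq_zero_of_smul_mulVec_eq [NoZeroDivisors R] {A B : Matrix ι ι R}
    (hA : A.IsSymm) (hB : B.IsSymm) {s t s' t' : R} {v w : ι → R}
    (hv : t • (A *ᵥ v) = s • (B *ᵥ v)) (hw : t' • (A *ᵥ w) = s' • (B *ᵥ w))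
    (hst : s * t' - s' * t ≠ 0) :
    v ⬝ᵥ (A *ᵥ w) = 0 ∧ v ⬝ᵥ (B *ᵥ w) = 0 := by
  have hAwv : w ⬝ᵥ (A *ᵥ v) = v ⬝ᵥ (A *ᵥ w) := by
    simpa [hA.eq] using dotProduct_transpose_mulVec A w v
  have hBwv : w ⬝ᵥ (B *ᵥ v) = v ⬝ᵥ (B *ᵥ w) := by
    simpa [hB.eq] using dotProduct_transpose_mulVec B w v
  have h₁ : t' * v ⬝ᵥ (A *ᵥ w) = s' * v ⬝ᵥ (B *ᵥ w) := by
    simpa using congrArg (v ⬝ᵥ ·) hw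
  have h₂ : t * v ⬝ᵥ (A *ᵥ w) = s * v ⬝ᵥ (B *ᵥ w) := by
    simpa [hAwv, hBwv] using congrArg (w ⬝ᵥ ·) hv
  constructor
  · refine (mul_eq_zero.1 ?_).resolve_left hst
    linear_combination s * h₁ - s' * h₂
  · refine (mul_eq_zero.1 ?_).resolve_left hst
    linear_combination t * h₁ - t' * h₂

theorem smul_sub_smul_mulVec_eq_of_smul_mulVec_eq {A B : Matrix ι ι R} {s t : R} {v : ι → R}
    (hv : t • (A *ᵥ v) = s • (B *ᵥ v)) (x₀ y₀ x₁ y₁ : R) :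
    (s * x₀ - t * y₀) • ((x₁ • A - y₁ • B) *ᵥ v) =
      (s * x₁ - t * y₁) • ((x₀ • A - y₀ • B) *ᵥ v) := by
  simp only [sub_mulVec, smul_mulVec]
  linear_combination (norm := module) (x₀ * y₁ - x₁ * y₀) • hv

end CommRing

variable [Field K]

theorem exists_ne_zero_smul_mulVec_eq_of_det_eq_prod [DecidableEq ι] {A B : Matrix ι ι K}
    {s t : ι → K} (hfact : ∀ x y : K, (x • A - y • B).det = ∏ i, (s i * x - t i * y)) (i : ι) :
    ∃ v ≠ 0, t i • (A *ᵥ v) = s i • (B *ᵥ v) := by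
  have hdet : (t i • A - s i • B).det = 0 := by
    rw [hfact]
    exact Finset.prod_eq_zero (Finset.mem_univ i) (by ring)
  obtain ⟨v, hv0, hv⟩ := exists_mulVec_eq_zero_iff.2 hdet
  refine ⟨v, hv0, ?_⟩
  rwa [sub_mulVec, smul_mulVec, smul_mulVec, sub_eq_zero] at hv

theorem linearIndependent_of_smul_mulVec_eq [DecidableEq ι] {A B : Matrix ι ι K}
    {s t : κ → K} {v : κ → ι → K} (hv0 : ∀ k, v k ≠ 0)
    (hv : ∀ k, t k • (A *ᵥ v k) = s k • (B *ᵥ v k))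
    (hdist : ∀ i j, i ≠ j → s i * t j - s j * t i ≠ 0)
    {x₀ y₀ x₁ y₁ : K} (hP : IsUnit (x₀ • A - y₀ • B).det) (hδ : x₀ * y₁ - x₁ * y₀ ≠ 0)
    (hd : ∀ k, s k * x₀ - t k * y₀ ≠ 0) :
    LinearIndependent K v := by
  set P := x₀ • A - y₀ • B
  set Q := x₁ • A - y₁ • B
  set μ : κ → K := fun k => (s k * x₁ - t k * y₁) / (s k * x₀ - t k * y₀)
  have hμ : Function.Injective μ := by
    intro i j hij
    by_contra hne
    have := (div_eq_div_iff (hd i) (hd j)).1 hij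
    exact mul_ne_zero (hdist i j hne) hδ (by linear_combination this)
  refine Module.End.eigenvectors_linearIndependent' (toLin' (P⁻¹ * Q)) μ hμ v fun k => ⟨?_, hv0 k⟩
  rw [Module.End.mem_eigenspace_iff, toLin'_apply, ← mulVec_mulVec]
  have hQ : Q *ᵥ v k = ((s k * x₁ - t k * y₁) / (s k * x₀ - t k * y₀)) • (P *ᵥ v k) := by
    rw [div_eq_inv_mul, mul_smul, ← smul_sub_smul_mulVec_eq_of_smul_mulVec_eq (hv k), smul_smul,
      inv_mul_cancel₀ (hd k), one_smul]
  rw [hQ, mulVec_smul, mulVec_mulVec, nonsing_inv_mul P hP, one_mulVec]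

theorem isDiag_of_mul_mul_transpose_of_pairwise {M : Matrix ι ι K} {v : ι → ι → K}
    (h : ∀ i j, i ≠ j → v i ⬝ᵥ (M *ᵥ v j) = 0) : (of v * M * (of v)ᵀ).IsDiag := by
  intro i j hij
  rw [mul_mul_apply, transpose_transpose]
  exact h i j hij

theorem exists_isUnit_det_isDiag_of_det_eq_prod [DecidableEq ι] {A B : Matrix ι ι K}
    (hA : A.IsSymm) (hB : B.IsSymm) {s t : ι → K}
    (hfact : ∀ x y : K, (x • A - y • B).det = ∏ i, (s i * x - t i * y))
    (hne : ∃ x y : K, (x • A - y • B).det ≠ 0)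
    (hdist : ∀ i j, i ≠ j → s i * t j - s j * t i ≠ 0) :
    ∃ U : Matrix ι ι K, IsUnit U.det ∧ (Uᵀ * A * U).IsDiag ∧ (Uᵀ * B * U).IsDiag := by
  rcases isEmpty_or_nonempty ι with hι | hι
  · exact ⟨1, by simp, fun i => isEmptyElim i, fun i => isEmptyElim i⟩
  obtain ⟨x₀, y₀, hP⟩ := hne
  have hd : ∀ i, s i * x₀ - t i * y₀ ≠ 0 := fun i =>
    Finset.prod_ne_zero_iff.1 (hfact x₀ y₀ ▸ hP) i (Finset.mem_univ i)
  obtain ⟨x₁, y₁, hδ⟩ : ∃ x₁ y₁ : K, x₀ * y₁ - x₁ * y₀ ≠ 0 := by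
    refine exists_mul_sub_mul_ne_zero (not_and_or.1 ?_)
    rintro ⟨rfl, rfl⟩
    simp at hP
  choose v hv0 hv using exists_ne_zero_smul_mulVec_eq_of_det_eq_prod hfact
  have hU : IsUnit (of v) := linearIndependent_rows_iff_isUnit.1 <|
    linearIndependent_of_smul_mulVec_eq hv0 hv hdist (isUnit_iff_ne_zero.2 hP) hδ hd
  refine ⟨(of v)ᵀ, by simpa [det_transpose] using (isUnit_iff_isUnit_det _).1 hU, ?_, ?_⟩ <;>
    rw [transpose_transpose] <;> refine isDiag_of_mul_mul_transpose_of_pairwise fun i j hij => ?_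
  · exact (dotProduct_mulVec_eq_zero_of_smul_mulVec_eq hA hB (hv i) (hv j) (hdist i j hij)).1
  · exact (dotProduct_mulVec_eq_zero_of_smul_mulVec_eq hA hB (hv i) (hv j) (hdist i j hij)).2

end Matrix

theorem stmt12_general {K L : Type} [Field K] [Field L] [Algebra K L]
    {n : ℕ}
    (A B : Matrix (Fin n) (Fin n) K) (hA : A.IsSymm) (hB : B.IsSymm)
    (s t : Fin n → L)
    -- over the splitting field `L`, the binary form `det(Ax - By)` factors completely
    (hfact : ∀ x y : L,
      (x • (A.map (algebraMap K L)) - y • (B.map (algebraMap K L))).det =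
        ∏ i : Fin n, (s i * x - t i * y))
    (hne : ∃ x y : L,
      (x • (A.map (algebraMap K L)) - y • (B.map (algebraMap K L))).det ≠ 0)
    -- the `n` roots are pairwise distinct in `P¹`
    (hdist : ∀ i j : Fin n, i ≠ j → s i * t j - s j * t i ≠ 0) :
    ∃ U : Matrix (Fin n) (Fin n) L, IsUnit U.det ∧
      (Uᵀ * A.map (algebraMap K L) * U).IsDiag ∧
      (Uᵀ * B.map (algebraMap K L) * U).IsDiag :=
  exists_isUnit_det_isDiag_of_det_eq_prod (hA.map _) (hB.map _) hfact hne hdist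

theorem stmt12 {K L : Type} [Field K] [CharZero K] [Field L] [Algebra K L]
    {n : ℕ} (hn : 3 ≤ n)
    (A B : Matrix (Fin n) (Fin n) K) (hA : A.IsSymm) (hB : B.IsSymm)
    (s t : Fin n → L)
    -- over the splitting field `L`, the binary form `det(Ax - By)` factors completely
    (hfact : ∀ x y : L,
      (x • (A.map (algebraMap K L)) - y • (B.map (algebraMap K L))).det =
        ∏ i : Fin n, (s i * x - t i * y))
    (hne : ∃ x y : L,
      (x • (A.map (algebraMap K L)) - y • (B.map (algebraMap K L))).det ≠ 0)
    -- the `n` roots are pairwise distinct in `P¹`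
    (hdist : ∀ i j : Fin n, i ≠ j → s i * t j - s j * t i ≠ 0) :
    ∃ U : Matrix (Fin n) (Fin n) L, IsUnit U.det ∧
      (Uᵀ * A.map (algebraMap K L) * U).IsDiag ∧
      (Uᵀ * B.map (algebraMap K L) * U).IsDiag :=
  stmt12_general A B hA hB s t hfact hne hdist
end
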